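/- Let G be a graph that is an obstruction for S_k (G does not embed in S_k but every G - e does), and suppose for every edge e = uv of G, G - e has an embedding Π_e in S_k with a face where x and y alternate, and in which u and v are not cofacial. Then G has an embedding in S_{k+1} with a face where x and y alternate. -/

import Mathlib

open SimpleGraph

namespace AltPaper

variable {V : Type*} {W : Type*} {U : Type*}

/-- The dart-reversal permutation of a graph. -/
def dartRev (G : SimpleGraph V) : Equiv.Perm G.Dart :=
  Function.Involutive.toPerm SimpleGraph.Dart.symm SimpleGraph.Dart.symm_involutive

/-- A combinatorial embedding of `G` into an orientable surface, given by a rotation system: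
a permutation of the darts whose orbits are exactly the stars of the vertices. -/
structure RotSys (G : SimpleGraph V) where
  rot : Equiv.Perm G.Dart
  fst_rot : ∀ d : G.Dart, (rot d).fst = d.fst
  orbit_full : ∀ d d' : G.Dart, d.fst = d'.fst → ∃ n : ℕ, (rot ^ n) d = d'

namespace RotSys

variable {G : SimpleGraph V}

/-- The face-tracing permutation of the rotation system. -/
def facePerm (R : RotSys G) : Equiv.Perm G.Dart := (dartRev G).trans R.rot

/-- The number of faces of the embedding: the number of orbits of the face permutation. -/
noncomputable def numFaces (R : RotSys G) : ℕ :=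
  Nat.card (MulAction.orbitRel.Quotient (Subgroup.zpowers R.facePerm) G.Dart)

/-- The number of non-isolated vertices: orbits of the rotation. -/
noncomputable def numVerts (R : RotSys G) : ℕ :=
  Nat.card (MulAction.orbitRel.Quotient (Subgroup.zpowers R.rot) G.Dart)

/-- The number of connected components containing at least one edge. -/
noncomputable def numComps (R : RotSys G) : ℕ :=
  Nat.card (MulAction.orbitRel.Quotient (Subgroup.closure {R.rot, dartRev G}) G.Dart)

/-- By Euler's formula, the (total, orientable) genus of the embedding `R` is at most `k`.
Isolated vertices are irrelevant for the genus and are ignored. -/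
noncomputable def genusLE (R : RotSys G) (k : ℕ) : Prop :=
  2 * R.numComps + Nat.card G.edgeSet ≤ 2 * k + R.numFaces + R.numVerts

/-- Vertices `v₁ v₂ v₃ v₄` appear (in this cyclic order) on a common face of `R`. -/
def cyclicOrderedFace (R : RotSys G) (v₁ v₂ v₃ v₄ : V) : Prop :=
  ∃ (d : G.Dart) (a b c : ℕ), 0 < a ∧ a < b ∧ b < c ∧
    c < Function.minimalPeriod (⇑R.facePerm) d ∧
    d.fst = v₁ ∧ ((R.facePerm ^ a) d).fst = v₂ ∧ ((R.facePerm ^ b) d).fst = v₃ ∧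
    ((R.facePerm ^ c) d).fst = v₄

/-- There is a face of `R` in which `x` and `y` appear (at least) twice, in the alternating
cyclic order `x, y, x, y`. -/
def altFace (R : RotSys G) (x y : V) : Prop := R.cyclicOrderedFace x y x y

/-- `u` and `v` lie on a common face of `R`. -/
def Cofacial (R : RotSys G) (u v : V) : Prop :=
  ∃ (d : G.Dart) (n : ℕ), d.fst = u ∧ ((R.facePerm ^ n) d).fst = v

/-- All vertices of `s` lie on a common face of `R`. -/
def CofacialSet (R : RotSys G) (s : Set V) : Prop :=
  ∃ d : G.Dart, ∀ v ∈ s, ∃ n : ℕ, ((R.facePerm ^ n) d).fst = v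

end RotSys

/-- `G` embeds in the orientable surface of genus `k`. -/
def GenusLE (G : SimpleGraph V) (k : ℕ) : Prop := ∃ R : RotSys G, R.genusLE k

/-- `G` has an embedding in the orientable surface of genus `k` with a face in which the
vertices `x` and `y` appear twice, in alternating cyclic order. -/
def AltEmb (G : SimpleGraph V) (x y : V) (k : ℕ) : Prop :=
  ∃ R : RotSys G, R.genusLE k ∧ R.altFace x y

end AltPaper
namespace AltPaper

variable {V : Type*} {W : Type*} {U : Type*}

/-- A combinatorial embedding of `G` into a (possibly non-orientable) surface:
a rotation system together with a signature on the edges. -/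
structure SRS (G : SimpleGraph V) where
  rot : Equiv.Perm G.Dart
  fst_rot : ∀ d : G.Dart, (rot d).fst = d.fst
  orbit_full : ∀ d d' : G.Dart, d.fst = d'.fst → ∃ n : ℕ, (rot ^ n) d = d'
  sign : Sym2 V → Bool

namespace SRS

variable {G : SimpleGraph V}

/-- Auxiliary involution used in signed face tracing: reverse the dart and update the side. -/
def flip (S : SRS G) : Equiv.Perm (G.Dart × Bool) :=
  Function.Involutive.toPerm (fun p => (p.1.symm, xor p.2 (S.sign p.1.edge)))
    (by
      rintro ⟨d, s⟩
      have h1 : d.symm.symm = d := SimpleGraph.Dart.symm_involutive d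
      have h2 : d.symm.edge = d.edge := SimpleGraph.Dart.edge_symm d
      simp [h1, h2, Bool.xor_assoc])

/-- Auxiliary permutation used in signed face tracing: apply the rotation forwards or
backwards according to the current side. -/
def rotPm (S : SRS G) : Equiv.Perm (G.Dart × Bool) where
  toFun p := (cond p.2 (S.rot p.1) (S.rot.symm p.1), p.2)
  invFun p := (cond p.2 (S.rot.symm p.1) (S.rot p.1), p.2)
  left_inv := by rintro ⟨d, (_ | _)⟩ <;> simp
  right_inv := by rintro ⟨d, (_ | _)⟩ <;> simp

/-- The signed face-tracing permutation, acting on sided darts. -/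
def facePerm (S : SRS G) : Equiv.Perm (G.Dart × Bool) := (S.flip).trans (S.rotPm)

/-- Twice the number of faces (each face is traced once on each side). -/
noncomputable def numFaces2 (S : SRS G) : ℕ :=
  Nat.card (MulAction.orbitRel.Quotient (Subgroup.zpowers S.facePerm) (G.Dart × Bool))

noncomputable def numVerts (S : SRS G) : ℕ :=
  Nat.card (MulAction.orbitRel.Quotient (Subgroup.zpowers S.rot) G.Dart)

noncomputable def numComps (S : SRS G) : ℕ :=
  Nat.card (MulAction.orbitRel.Quotient (Subgroup.closure {S.rot, dartRev G}) G.Dart)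

/-- Twice the (total) Euler genus of the embedding, via Euler's formula. -/
noncomputable def eulerGenus2 (S : SRS G) : ℤ :=
  4 * S.numComps - 2 * S.numVerts + 2 * Nat.card G.edgeSet - S.numFaces2

/-- The Euler genus of the embedding is at most `h`. -/
noncomputable def eulerGenusLE (S : SRS G) (h : ℕ) : Prop := S.eulerGenus2 ≤ 2 * h

/-- The sided darts `p` and `q` lie on the same face. -/
def SameFace (S : SRS G) (p q : G.Dart × Bool) : Prop := ∃ n : ℤ, (S.facePerm ^ n) p = q

/-- The set of darts of the facial walk of the face of `p`. -/
def faceDarts (S : SRS G) (p : G.Dart × Bool) : Set G.Dart :=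
  {d | ∃ q, S.SameFace p q ∧ q.1 = d}

/-- The vertex `v` appears on the facial walk of the face of `p`. -/
def vertexOnFace (S : SRS G) (p : G.Dart × Bool) (v : V) : Prop :=
  ∃ d ∈ S.faceDarts p, d.fst = v

/-- The facial walk of the face of `p` visits `x` and `y` in alternating cyclic order
`x, y, x, y`. -/
def altFaceS (S : SRS G) (p : G.Dart × Bool) (x y : V) : Prop :=
  ∃ (a b c : ℕ), 0 < a ∧ a < b ∧ b < c ∧
    c < Function.minimalPeriod (⇑S.facePerm) p ∧
    p.1.fst = x ∧ ((S.facePerm ^ a) p).1.fst = y ∧ ((S.facePerm ^ b) p).1.fst = x ∧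
    ((S.facePerm ^ c) p).1.fst = y

end SRS

/-- `G` embeds in the projective plane. -/
def ProjPlanar (G : SimpleGraph V) : Prop := ∃ S : SRS G, S.eulerGenusLE 1

end AltPaper
namespace AltPaper

variable {V : Type*} {W : Type*} {U : Type*}

/-! ### The multigraph obtained by identifying two vertices, and its planar embeddings -/

/-- The darts of the multigraph `Ĥ` obtained from `G` by identifying `x` and `y`
(deleting the edge `xy` first, if present). -/
def PD (G : SimpleGraph V) (x y : V) : Type _ := {d : G.Dart // d.edge ≠ s(x, y)}

/-- The source vertex of a dart of `Ĥ`: the identified vertex `v_{xy}` is represented by `x`. -/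
def psrc (G : SimpleGraph V) (x y : V) [DecidableEq V] (d : PD G x y) : V :=
  if d.val.fst = y then x else d.val.fst

/-- Dart reversal in `Ĥ`. -/
def prev (G : SimpleGraph V) (x y : V) : Equiv.Perm (PD G x y) :=
  Function.Involutive.toPerm
    (fun d => ⟨d.val.symm, by rw [SimpleGraph.Dart.edge_symm]; exact d.prop⟩)
    (by
      rintro ⟨d, hd⟩
      exact Subtype.ext (SimpleGraph.Dart.symm_involutive d))

/-- A combinatorial embedding (in an orientable surface) of the multigraph `Ĥ` obtained from
`G` by identifying `x` and `y` into the vertex `v_{xy}` (loops are discarded). -/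
structure PinchRS (G : SimpleGraph V) (x y : V) [DecidableEq V] where
  rot : Equiv.Perm (PD G x y)
  src_rot : ∀ d, psrc G x y (rot d) = psrc G x y d
  orbit_full : ∀ d d', psrc G x y d = psrc G x y d' → ∃ n : ℕ, (rot ^ n) d = d'

namespace PinchRS

variable [DecidableEq V] {G : SimpleGraph V} {x y : V}

def facePerm (P : PinchRS G x y) : Equiv.Perm (PD G x y) := (prev G x y).trans P.rot

noncomputable def numFaces (P : PinchRS G x y) : ℕ :=
  Nat.card (MulAction.orbitRel.Quotient (Subgroup.zpowers P.facePerm) (PD G x y))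

noncomputable def numVerts (P : PinchRS G x y) : ℕ :=
  Nat.card (MulAction.orbitRel.Quotient (Subgroup.zpowers P.rot) (PD G x y))

noncomputable def numComps (P : PinchRS G x y) : ℕ :=
  Nat.card (MulAction.orbitRel.Quotient (Subgroup.closure {P.rot, prev G x y}) (PD G x y))

/-- The embedding `P` of `Ĥ` is planar (Euler's formula; the dart count is twice the
edge count). -/
noncomputable def Planar (P : PinchRS G x y) : Prop :=
  4 * P.numComps + Nat.card (PD G x y) ≤ 2 * P.numFaces + 2 * P.numVerts

/-- The number of label transitions in the cyclic sequence of labels around the identified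
vertex `v_{xy}`: a dart incident with `v_{xy}` is labelled `X` when it comes from `x`. -/
noncomputable def pinchTrans (P : PinchRS G x y) : ℕ :=
  Nat.card {d : PD G x y // psrc G x y d = x ∧
    ¬ ((d.val.fst = x) ↔ ((P.rot d).val.fst = x))}

end PinchRS

/-! ### Splitting the two terminals -/

/-- The projection recording that `Sum.inr false` is the second copy of `x` and
`Sum.inr true` is the second copy of `y` (while `Sum.inl x`, `Sum.inl y` are the first
copies). -/
def splitProj (x y : V) : V ⊕ Bool → V
  | Sum.inl v => v
  | Sum.inr false => x
  | Sum.inr true => y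

/-- `G'` is obtained from `G` by splitting `x` into `x₁ = Sum.inl x`, `x₂ = Sum.inr false`
and `y` into `y₁ = Sum.inl y`, `y₂ = Sum.inr true`, distributing the incident edges. -/
def IsSplitAt (G : SimpleGraph V) (x y : V) (G' : SimpleGraph (V ⊕ Bool)) : Prop :=
  (∀ a b, G'.Adj a b → G.Adj (splitProj x y a) (splitProj x y b)) ∧
  (∀ u v, G.Adj u v → ∃ a b, G'.Adj a b ∧ splitProj x y a = u ∧ splitProj x y b = v) ∧
  (∀ a b a' b', G'.Adj a b → G'.Adj a' b' →
    splitProj x y a = splitProj x y a' → splitProj x y b = splitProj x y b' → a = a' ∧ b = b')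

/-- The simple graph `G/xy` obtained from `G` by identifying `x` and `y` (the edge `xy`,
if present, is deleted first, and multiple edges are merged); the merged vertex is `x`,
and `y` becomes isolated. -/
def pinch (G : SimpleGraph V) (x y : V) : SimpleGraph V :=
  SimpleGraph.fromRel (fun a b => a ≠ y ∧ b ≠ y ∧
    ∃ a' b', G.Adj a' b' ∧ (a' = a ∨ (a' = y ∧ a = x)) ∧ (b' = b ∨ (b' = y ∧ b = x)))

/-- The graph `G*`: the `xy`-sum of `G` with a copy of `K₅` minus an edge, the two ends of
the deleted edge being identified with `x` and `y`. -/
def Gstar (G : SimpleGraph V) (x y : V) : SimpleGraph (V ⊕ Fin 3) :=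
  SimpleGraph.fromRel (fun a b =>
    (∃ u v, a = Sum.inl u ∧ b = Sum.inl v ∧ G.Adj u v) ∨
    (∃ i j : Fin 3, a = Sum.inr i ∧ b = Sum.inr j) ∨
    (∃ i : Fin 3, a = Sum.inr i ∧ (b = Sum.inl x ∨ b = Sum.inl y)))

/-- The two-terminal graph corresponding to an `XY`-labelled graph `H`:
add the terminal `x = Sum.inr false` joined to all `X`-labelled vertices and the terminal
`y = Sum.inr true` joined to all `Y`-labelled vertices. -/
def termGraph (H : SimpleGraph W) (lX lY : W → Prop) : SimpleGraph (W ⊕ Bool) :=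
  SimpleGraph.fromRel (fun a b =>
    (∃ u v, a = Sum.inl u ∧ b = Sum.inl v ∧ H.Adj u v) ∨
    (∃ u, a = Sum.inr false ∧ b = Sum.inl u ∧ lX u) ∨
    (∃ u, a = Sum.inr true ∧ b = Sum.inl u ∧ lY u))

/-- Identification map used for `xy`-sums: `w₁ ↦ u₁`, `w₂ ↦ u₂`. -/
def sumRho [DecidableEq W] (u₁ u₂ : U) (w₁ w₂ : W) : W → U ⊕ W := fun w =>
  if w = w₁ then Sum.inl u₁ else if w = w₂ then Sum.inl u₂ else Sum.inr w

/-- The `xy`-sum of `H₁` (with terminals `u₁, u₂`) and `H₂` (with terminals `w₁, w₂`):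
their union after identifying `u₁` with `w₁` and `u₂` with `w₂`; the edge between the two
identified vertices is deleted even if present in a summand. -/
def xySum [DecidableEq W] (H₁ : SimpleGraph U) (u₁ u₂ : U)
    (H₂ : SimpleGraph W) (w₁ w₂ : W) : SimpleGraph (U ⊕ W) :=
  SimpleGraph.fromRel (fun p q => s(p, q) ≠ s(Sum.inl u₁, Sum.inl u₂) ∧
    ((∃ a b, p = Sum.inl a ∧ q = Sum.inl b ∧ H₁.Adj a b) ∨
     (∃ a b, H₂.Adj a b ∧ p = sumRho u₁ u₂ w₁ w₂ a ∧ q = sumRho u₁ u₂ w₁ w₂ b)))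

/-! ### Subdivisions -/

/-- A subdivision of `K` contained in `G`: branch vertices are given by the injection `f`,
branches are internally disjoint paths avoiding the branch vertices. -/
structure SubdivisionEmb (K : SimpleGraph U) (G : SimpleGraph V) where
  f : U → V
  inj : Function.Injective f
  walk : ∀ {a b : U}, K.Adj a b → G.Walk (f a) (f b)
  isPath : ∀ {a b : U} (h : K.Adj a b), (walk h).IsPath
  symmCompat : ∀ {a b : U} (h : K.Adj a b), walk h.symm = (walk h).reverse
  internal_disj : ∀ {a b c d : U} (h₁ : K.Adj a b) (h₂ : K.Adj c d), s(a, b) ≠ s(c, d) →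
    ∀ v, v ∈ (walk h₁).support → v ∈ (walk h₂).support →
      (v = f a ∨ v = f b) ∧ (v = f c ∨ v = f d)
  branch_only : ∀ {a b : U} (h : K.Adj a b) (u : U), f u ∈ (walk h).support → u = a ∨ u = b

/-- The set of vertices of the subdivision. -/
def SubSupport {K : SimpleGraph U} {G : SimpleGraph V} (s : SubdivisionEmb K G) : Set V :=
  {v | ∃ (a b : U) (h : K.Adj a b), v ∈ (s.walk h).support}

/-- The set of edges of the subdivision. -/
def SubEdges {K : SimpleGraph U} {G : SimpleGraph V} (s : SubdivisionEmb K G) : Set (Sym2 V) :=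
  {e | ∃ (a b : U) (h : K.Adj a b), e ∈ (s.walk h).edges}

/-! ### Blocks -/

/-- `B` is a block of `H`: a maximal connected vertex set without cutvertex. -/
def IsBlock (H : SimpleGraph W) (B : Set W) : Prop :=
  B.Nonempty ∧ (H.induce B).Preconnected ∧ (∀ v : W, (H.induce (B \ {v})).Preconnected) ∧
  ∀ B' : Set W, B ⊆ B' →
    ((H.induce B').Preconnected ∧ ∀ v : W, (H.induce (B' \ {v})).Preconnected) → B' = B

/-! ### Bridges of a cycle -/

/-- The `C`-bridge generated by a set `K` of vertices (the component) : `K` together with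
all edges leaving `K` and their endpoints. -/
def bridgeOf (G : SimpleGraph V) (K : Set V) : G.Subgraph where
  verts := K ∪ {v | ∃ u ∈ K, G.Adj u v}
  Adj a b := G.Adj a b ∧ (a ∈ K ∨ b ∈ K)
  adj_sub h := h.1
  edge_vert := by
    rintro a b ⟨h, ha | hb⟩
    · exact Or.inl ha
    · exact Or.inr ⟨b, hb, h.symm⟩
  symm := by
    constructor
    rintro a b ⟨h, hab⟩
    exact ⟨h.symm, hab.symm⟩

/-- `B` is a `C`-bridge in `G`, for a closed walk `C`: either a chord of `C`, or a connected
component of `G - V(C)` together with all edges joining it to `C`. -/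
def IsCBridge {r : V} (G : SimpleGraph V) (C : G.Walk r r) (B : G.Subgraph) : Prop :=
  (∃ (a b : V) (h : G.Adj a b), a ∈ C.support ∧ b ∈ C.support ∧ s(a, b) ∉ C.edges ∧
      B = G.subgraphOfAdj h) ∨
  (∃ c : (G.induce {v | v ∉ C.support}).ConnectedComponent,
      B = bridgeOf G (Subtype.val '' c.supp))

/-- The attachments of a `C`-bridge `B`. -/
def attachments {G : SimpleGraph V} {r : V} (C : G.Walk r r) (B : G.Subgraph) : Set V :=
  B.verts ∩ {v | v ∈ C.support}

/-- The vertex set of the segment `C[u,v]` of the closed walk `C` from `u` to `v` (in the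
orientation of `C`). -/
def segSet [DecidableEq V] {r : V} (G : SimpleGraph V) (C : G.Walk r r) (u v : V) : Set V :=
  {w | ∃ (hu : u ∈ C.support) (hv : v ∈ (C.rotate u hu).support),
    w ∈ ((C.rotate u hu).takeUntil v hv).support}

/-- Two `C`-bridges avoid each other. -/
def Avoid [DecidableEq V] {r : V} (G : SimpleGraph V) (C : G.Walk r r)
    (B₁ B₂ : G.Subgraph) : Prop :=
  ∃ u v, u ∈ C.support ∧ v ∈ C.support ∧
    attachments C B₁ ⊆ segSet G C u v ∧ attachments C B₂ ⊆ segSet G C v u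

/-- Two `C`-bridges overlap. -/
def Overlap [DecidableEq V] {r : V} (G : SimpleGraph V) (C : G.Walk r r)
    (B₁ B₂ : G.Subgraph) : Prop := ¬ Avoid G C B₁ B₂

/-! ### The classes `A^k_{xy}` and their obstructions -/

/-- Contraction of the edge `uv` of `G`: `v` is merged into `u` (and becomes isolated). -/
def contractEdge (G : SimpleGraph V) (u v : V) : SimpleGraph V :=
  SimpleGraph.fromRel (fun a b => a ≠ v ∧ b ≠ v ∧
    (G.Adj a b ∨ (a = u ∧ G.Adj v b) ∨ (b = u ∧ G.Adj a v)))

/-- The class `A^k_{xy}`: `G` embeds in the orientable surface of genus `k-1`, or `G` is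
`xy`-alternating on the orientable surface of genus `k`. -/
def Akxy (G : SimpleGraph V) (x y : V) (k : ℕ) : Prop :=
  GenusLE G (k - 1) ∨ AltEmb G x y k

/-- `G` (with terminals `x, y`) is an obstruction for the class `A^k_{xy}`: it is not in the
class, but every deletion and every allowed contraction (one which does not identify the two
terminals) is. -/
def MinimalNotAk (G : SimpleGraph V) (x y : V) (k : ℕ) : Prop :=
  ¬ Akxy G x y k ∧
  (∀ e ∈ G.edgeSet, Akxy (G.deleteEdges {e}) x y k) ∧
  (∀ u v, G.Adj u v → v ≠ x → v ≠ y → Akxy (contractEdge G u v) x y k)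

/-! ### Cyclic label sequences -/

/-- The number of transitions between consecutive entries of a list. -/
def listTrans (w : List Bool) : ℕ := ((w.zip w.tail).filter (fun p => p.1 ≠ p.2)).length

/-- The number of transitions of a list, viewed as a cyclic sequence. -/
def cycTrans : List Bool → ℕ
  | [] => 0
  | a :: t => listTrans ((a :: t) ++ [a])

/-- The cyclic sequence of labelled vertices (labels are subsets of `{X, Y}`, with
`true = X`, `false = Y`) contains six distinct vertices, in this cyclic order or its
reverse, whose labels contain `X, Y, X, Y, X, Y` respectively. -/
def HasXYXYXY (n : ℕ) (lab : ZMod (n + 1) → Finset Bool) : Prop :=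
  ∃ (s : ZMod (n + 1)) (a : Fin 6 → ℕ) (ε : Bool), StrictMono a ∧ a 5 ≤ n ∧
    ∀ k : Fin 6, (decide (k.val % 2 = 0)) ∈
      lab (s + (if ε then ((a k : ℕ) : ZMod (n + 1)) else -((a k : ℕ) : ZMod (n + 1))))

/-- `L` arranges the labels of each vertex of the cyclic sequence into a list (each label
used exactly once). -/
def IsArrangement (n : ℕ) (lab : ZMod (n + 1) → Finset Bool)
    (L : ZMod (n + 1) → List Bool) : Prop :=
  ∀ i, (L i).Nodup ∧ (L i).toFinset = lab i

/-- The cyclic label sequence obtained by concatenating the arranged labels in the cyclic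
order of the vertices. -/
def arranged (n : ℕ) (L : ZMod (n + 1) → List Bool) : List Bool :=
  (List.ofFn (fun j : Fin (n + 1) => L ((j : ℕ) : ZMod (n + 1)))).flatten

end AltPaper

/-!
Insert the edge `uv` into the embedding `Π_e` of `G - uv`: the dart `(u, v)` goes into the
rotation at `u` and `(v, u)` into the rotation at `v`. The face permutation changes by two
transpositions, each of which merges two faces or splits one, so Euler's formula bounds the genus
of the new embedding by `k + 1`. Since `u` and `v` are not cofacial, at most one of the two
transpositions touches the `xy`-alternating face. That face is therefore cut open at one point at
most, and the pattern `x, y, x, y` can be read on the part of the new face avoiding the cut.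
-/

open Equiv Function

namespace Equiv.Perm

variable {α β : Type*}

theorem SameCycle.mem_of_mapsTo [Finite α] {σ : Perm α} {s : Set α} {x y : α}
    (hs : Set.MapsTo σ s s) (hx : x ∈ s) (h : σ.SameCycle x y) : y ∈ s := by
  obtain ⟨n, rfl⟩ := h.exists_nat_pow_eq
  clear h
  induction n with
  | zero => exact hx
  | succ n ih => rw [pow_succ', mul_apply]; exact hs ih

theorem sameCycle_apply_self (σ : Perm α) (x : α) : σ.SameCycle x (σ x) :=
  sameCycle_apply_right.2 SameCycle.rfl

/-- Fixed points count as cycles, unlike in `Equiv.Perm.cycleType`. -/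
noncomputable def numCycles (σ : Perm α) : ℕ :=
  Nat.card (MulAction.orbitRel.Quotient (Subgroup.zpowers σ) α)

theorem orbitRel_zpowers_iff {σ : Perm α} {x y : α} :
    MulAction.orbitRel (Subgroup.zpowers σ) α x y ↔ σ.SameCycle y x := by
  rw [MulAction.orbitRel_apply, MulAction.mem_orbit_iff, Subgroup.exists_zpowers]
  rfl

theorem numCycles_le_card [Finite β] {σ : Perm α} (g : α → β)
    (hg : ∀ x y, g x = g y ↔ σ.SameCycle x y) : σ.numCycles ≤ Nat.card β :=
  Nat.card_le_card_of_injective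
    (Quotient.lift g fun x y h => (hg x y).2 (orbitRel_zpowers_iff.1 h).symm) <| by
      rintro ⟨x⟩ ⟨y⟩ h
      exact Quotient.sound (orbitRel_zpowers_iff.2 ((hg x y).1 h).symm)

theorem card_le_numCycles [Finite α] {σ : Perm α} (g : β → α)
    (hg : ∀ i j, σ.SameCycle (g i) (g j) → i = j) : Nat.card β ≤ σ.numCycles := by
  have : Finite (MulAction.orbitRel.Quotient (Subgroup.zpowers σ) α) := Quotient.finite _
  exact Nat.card_le_card_of_injective
    (fun i => (Quotient.mk _ (g i) : MulAction.orbitRel.Quotient (Subgroup.zpowers σ) α))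
    fun i j hij => hg i j (orbitRel_zpowers_iff.1 (Quotient.exact hij)).symm

section semiconj

variable {σ : Perm α} {τ : Perm β} {φ : α → β}

theorem pow_apply_of_semiconj (h : Semiconj φ σ τ) (n : ℕ) (x : α) :
    (τ ^ n) (φ x) = φ ((σ ^ n) x) := by
  rw [coe_pow, coe_pow, (h.iterate_right n).eq]

theorem sameCycle_iff_of_semiconj [Finite α] [Finite β] (hφ : Injective φ)
    (h : Semiconj φ σ τ) {x y : α} : τ.SameCycle (φ x) (φ y) ↔ σ.SameCycle x y := by
  constructor
  · intro hxy
    obtain ⟨n, hn⟩ := hxy.exists_nat_pow_eq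
    exact ⟨n, by simpa using hφ ((pow_apply_of_semiconj h n x).symm.trans hn)⟩
  · intro hxy
    obtain ⟨n, rfl⟩ := hxy.exists_nat_pow_eq
    exact ⟨n, by simpa using pow_apply_of_semiconj h n x⟩

theorem numCycles_add_one_le_of_semiconj [Finite α] [Finite β] (hφ : Injective φ)
    (h : Semiconj φ σ τ) {y₀ : β} (hy₀ : ∀ x, ¬τ.SameCycle (φ x) y₀) :
    σ.numCycles + 1 ≤ τ.numCycles := by
  have : Finite (MulAction.orbitRel.Quotient (Subgroup.zpowers σ) α) := Quotient.finite _
  rw [numCycles, ← Finite.card_option]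
  refine card_le_numCycles (fun q => q.elim y₀ fun q => φ q.out) ?_
  rintro (_ | i) (_ | j) hij
  · rfl
  · exact absurd hij.symm (hy₀ _)
  · exact absurd hij (hy₀ _)
  · change τ.SameCycle (φ i.out) (φ j.out) at hij
    rw [sameCycle_iff_of_semiconj hφ h, sameCycle_comm, ← orbitRel_zpowers_iff] at hij
    exact congrArg some (Quotient.out_equiv_out.1 hij)

end semiconj

section swap

variable [Finite α] [DecidableEq α] {σ : Perm α} {a b x y : α}

theorem sameCycle_swap_mul_of_not_sameCycle (hab : ¬σ.SameCycle a b) :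
    (swap a b * σ).SameCycle a b := by
  set σ' := swap a b * σ
  -- Along the `σ`-cycle of `b`, `σ'` follows `σ` until it sends `σ⁻¹ b` to `a`.
  have hinv : Set.MapsTo σ {w | ¬σ.SameCycle w a ∧ (σ'.SameCycle b w ∨ σ'.SameCycle b a)}
      {w | ¬σ.SameCycle w a ∧ (σ'.SameCycle b w ∨ σ'.SameCycle b a)} := by
    rintro w ⟨hwa, hw | hba⟩
    · refine ⟨fun h => hwa (sameCycle_apply_left.1 h), ?_⟩
      by_cases hb : σ w = b
      · exact Or.inl (hb ▸ SameCycle.rfl)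
      have ha : σ w ≠ a := fun h => hwa (h ▸ σ.sameCycle_apply_self w)
      have : σ' w = σ w := swap_apply_of_ne_of_ne ha hb
      exact Or.inl (this ▸ hw.trans (σ'.sameCycle_apply_self w))
    · exact ⟨fun h => hwa (sameCycle_apply_left.1 h), Or.inr hba⟩
  obtain ⟨-, hb | hba⟩ := SameCycle.mem_of_mapsTo hinv
    ⟨fun h => hab h.symm, Or.inl SameCycle.rfl⟩ (sameCycle_symm_apply_right.2 SameCycle.rfl)
  · have : σ' (σ.symm b) = a := by simp [σ']
    exact (this ▸ hb.trans (σ'.sameCycle_apply_self _)).symm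
  · exact hba.symm

theorem sameCycle_swap_mul_of_apply_eq_self (hb : σ b = b) : (swap a b * σ).SameCycle a b := by
  rcases eq_or_ne a b with rfl | hab
  · exact SameCycle.rfl
  · exact sameCycle_swap_mul_of_not_sameCycle fun h => hab (h.eq_of_right hb)

theorem sameCycle_swap_mul_apply_or (w : α) :
    (swap a b * σ).SameCycle w (σ w) ∨ σ.SameCycle w b := by
  by_cases hwb : σ.SameCycle w b
  · exact Or.inr hwb
  refine Or.inl ?_
  by_cases ha : σ w = a
  · have hab : ¬σ.SameCycle a b := fun h => hwb ((ha ▸ σ.sameCycle_apply_self w).trans h)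
    have : (swap a b * σ) w = b := by simp [ha]
    rw [ha]
    exact (this ▸ (swap a b * σ).sameCycle_apply_self w).trans
      (sameCycle_swap_mul_of_not_sameCycle hab).symm
  · have hb : σ w ≠ b := fun h => hwb (h ▸ σ.sameCycle_apply_self w)
    have : (swap a b * σ) w = σ w := swap_apply_of_ne_of_ne ha hb
    exact this ▸ (swap a b * σ).sameCycle_apply_self w

theorem SameCycle.swap_mul (hxb : ¬σ.SameCycle x b) (h : σ.SameCycle x y) :
    (swap a b * σ).SameCycle x y := by
  refine (SameCycle.mem_of_mapsTo (s := {w | σ.SameCycle x w ∧ (swap a b * σ).SameCycle x w})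
    ?_ ⟨SameCycle.rfl, SameCycle.rfl⟩ h).2
  rintro w ⟨hxw, hxw'⟩
  refine ⟨hxw.trans (σ.sameCycle_apply_self w), ?_⟩
  exact hxw'.trans ((sameCycle_swap_mul_apply_or w).resolve_right fun hwb => hxb (hxw.trans hwb))

theorem SameCycle.of_swap_mul (hxb : ¬σ.SameCycle x b) (hyb : ¬σ.SameCycle y b)
    (h : (swap a b * σ).SameCycle x y) : σ.SameCycle x y := by
  -- The `swap a b * σ`-orbit of `x` can only leave the `σ`-cycle of `x` by jumping from the
  -- cycle of `a` to that of `b`.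
  refine (SameCycle.mem_of_mapsTo
    (s := {w | σ.SameCycle x w ∨ (σ.SameCycle x a ∧ σ.SameCycle w b)})
    ?_ (Or.inl SameCycle.rfl) h).resolve_right fun h => hyb h.2
  intro w hw
  simp only [Set.mem_ofPred_eq, mul_apply] at hw ⊢
  by_cases ha : σ w = a
  · rw [ha, swap_apply_left]
    refine Or.inr ⟨?_, SameCycle.rfl⟩
    rcases hw with hw | hw
    · exact ha ▸ hw.trans (σ.sameCycle_apply_self w)
    · exact hw.1
  by_cases hb : σ w = b
  · rw [hb, swap_apply_right]
    rcases hw with hw | hw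
    · exact absurd (hb ▸ hw.trans (σ.sameCycle_apply_self w)) hxb
    · exact Or.inl hw.1
  rw [swap_apply_of_ne_of_ne ha hb]
  rcases hw with hw | hw
  · exact Or.inl (hw.trans (σ.sameCycle_apply_self w))
  · exact Or.inr ⟨hw.1, sameCycle_apply_left.2 hw.2⟩

/-- A transposition merges two cycles or splits one. -/
theorem numCycles_le_numCycles_swap_mul_add_one (σ : Perm α) (a b : α) :
    σ.numCycles ≤ (swap a b * σ).numCycles + 1 := by
  have : Finite (MulAction.orbitRel.Quotient (Subgroup.zpowers (swap a b * σ)) α) :=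
    Quotient.finite _
  classical
  rw [numCycles, numCycles, ← Finite.card_option]
  refine numCycles_le_card (fun x => if σ.SameCycle x b then none else
    some (Quotient.mk _ x : MulAction.orbitRel.Quotient (Subgroup.zpowers (swap a b * σ)) α))
    fun x y => ?_
  by_cases hx : σ.SameCycle x b <;> by_cases hy : σ.SameCycle y b
  · simpa [hx, hy] using hx.trans hy.symm
  · simpa [hx, hy] using fun h => hy (h.symm.trans hx)
  · simpa [hx, hy] using fun h => hx (h.trans hy)
  · simp only [hx, hy, if_false, Option.some.injEq]
    rw [Quotient.eq, orbitRel_zpowers_iff]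
    exact ⟨fun h => h.symm.of_swap_mul hx hy, fun h => (h.swap_mul hx).symm⟩

end swap

section period

theorem minimalPeriod_pos [Finite α] (σ : Perm α) (x : α) : 0 < minimalPeriod σ x :=
  minimalPeriod_pos_of_mem_periodicPts (σ.injective.mem_periodicPts x)

theorem pow_add_minimalPeriod_apply (σ : Perm α) (n : ℕ) (x : α) :
    (σ ^ (n + minimalPeriod σ x)) x = (σ ^ n) x := by
  rw [coe_pow, coe_pow, iterate_add_minimalPeriod_eq]

theorem minimalPeriod_pow_apply [Finite α] (σ : Perm α) (n : ℕ) (x : α) :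
    minimalPeriod σ ((σ ^ n) x) = minimalPeriod σ x := by
  rw [coe_pow, minimalPeriod_apply_iterate (σ.injective.mem_periodicPts x)]

theorem eq_or_eq_add_minimalPeriod_of_pow_apply_eq {σ : Perm α} {x : α} {n j : ℕ}
    (hj : j < minimalPeriod σ x) (hn : n < 2 * minimalPeriod σ x)
    (h : (σ ^ n) x = (σ ^ j) x) : n = j ∨ n = j + minimalPeriod σ x := by
  rw [coe_pow, coe_pow] at h
  by_cases hnp : n < minimalPeriod σ x
  · exact Or.inl ((iterate_eq_iterate_iff_of_lt_minimalPeriod hnp hj).1 h)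
  · obtain ⟨m, rfl⟩ : ∃ m, n = m + minimalPeriod σ x := ⟨n - minimalPeriod σ x, by omega⟩
    rw [iterate_add_minimalPeriod_eq] at h
    exact Or.inr (by rw [(iterate_eq_iterate_iff_of_lt_minimalPeriod (by omega) hj).1 h])

end period

section cycleOrdered

def CycleOrderedFrom (σ : Perm α) (f : α → β) (d : α) (v₁ v₂ v₃ v₄ : β) : Prop :=
  ∃ a b c : ℕ, 0 < a ∧ a < b ∧ b < c ∧ c < minimalPeriod σ d ∧
    f d = v₁ ∧ f ((σ ^ a) d) = v₂ ∧ f ((σ ^ b) d) = v₃ ∧ f ((σ ^ c) d) = v₄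

variable {f : α → β} {v₁ v₂ v₃ v₄ : β}

theorem CycleOrderedFrom.map {γ : Type*} {σ : Perm α} {τ : Perm γ} {φ : α → γ}
    (hφ : Injective φ) (h : Semiconj φ σ τ) {g : γ → β} (hfg : ∀ x, g (φ x) = f x) {d : α}
    (hd : CycleOrderedFrom σ f d v₁ v₂ v₃ v₄) : CycleOrderedFrom τ g (φ d) v₁ v₂ v₃ v₄ := by
  obtain ⟨a, b, c, ha, hab, hbc, hc, h₁, h₂, h₃, h₄⟩ := hd
  have hp : minimalPeriod τ (φ d) = minimalPeriod σ d := by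
    refine minimalPeriod_eq_minimalPeriod_iff.2 fun n => ?_
    simp only [IsPeriodicPt, IsFixedPt, ← (h.iterate_right n).eq, hφ.eq_iff]
  refine ⟨a, b, c, ha, hab, hbc, hp ▸ hc, ?_, ?_, ?_, ?_⟩ <;>
    simpa only [pow_apply_of_semiconj h, hfg]

variable [Finite α]

theorem CycleOrderedFrom.rotate {σ : Perm α} {d : α} (h : CycleOrderedFrom σ f d v₁ v₂ v₃ v₄) :
    ∃ d', CycleOrderedFrom σ f d' v₂ v₃ v₄ v₁ := by
  obtain ⟨a, b, c, ha, hab, hbc, hc, h₁, h₂, h₃, h₄⟩ := h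
  have hp := σ.minimalPeriod_pow_apply a d
  refine ⟨(σ ^ a) d, b - a, c - a, minimalPeriod σ d - a, by omega, by omega, by omega,
    by omega, h₂, ?_, ?_, ?_⟩
  · rwa [← mul_apply, ← pow_add, Nat.sub_add_cancel hab.le]
  · rwa [← mul_apply, ← pow_add, Nat.sub_add_cancel (hab.trans hbc).le]
  · rwa [← mul_apply, ← pow_add, Nat.sub_add_cancel (by omega), coe_pow, iterate_minimalPeriod]

theorem cycleOrderedFrom_of_eqOn {σ σ' : Perm α} {d : α} {i₁ i₂ i₃ i₄ : ℕ} (h₁₂ : i₁ < i₂)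
    (h₂₃ : i₂ < i₃) (h₃₄ : i₃ < i₄) (h₄ : i₄ < i₁ + minimalPeriod σ d)
    (hagree : ∀ n, i₁ ≤ n → n < i₄ → σ' ((σ ^ n) d) = σ ((σ ^ n) d))
    (hv₁ : f ((σ ^ i₁) d) = v₁) (hv₂ : f ((σ ^ i₂) d) = v₂) (hv₃ : f ((σ ^ i₃) d) = v₃)
    (hv₄ : f ((σ ^ i₄) d) = v₄) :
    CycleOrderedFrom σ' f ((σ ^ i₁) d) v₁ v₂ v₃ v₄ := by
  set d' := (σ ^ i₁) d
  have hshift : ∀ m, (σ ^ m) d' = (σ ^ (i₁ + m)) d := fun m => by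
    rw [← mul_apply, ← pow_add, add_comm]
  have hiter : ∀ m, m ≤ i₄ - i₁ → (σ' ^ m) d' = (σ ^ m) d' := by
    intro m hm
    induction m with
    | zero => rfl
    | succ m ih =>
      rw [pow_succ', mul_apply, ih (by omega), pow_succ', mul_apply, hshift,
        hagree _ (by omega) (by omega)]
  have hp : minimalPeriod σ d' = minimalPeriod σ d := σ.minimalPeriod_pow_apply i₁ d
  have hper : i₄ - i₁ < minimalPeriod σ' d' := by
    by_contra hle
    have hfix : IsPeriodicPt σ (minimalPeriod σ' d') d' := by
      have := iterate_minimalPeriod (f := σ') (x := d')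
      rwa [← coe_pow, hiter _ (by omega), coe_pow] at this
    have := hfix.minimalPeriod_le (σ'.minimalPeriod_pos d')
    omega
  have hlab : ∀ i, i₁ ≤ i → i ≤ i₄ → f ((σ' ^ (i - i₁)) d') = f ((σ ^ i) d) := by
    intro i h h'
    rw [hiter _ (by omega), hshift, Nat.add_sub_cancel' h]
  exact ⟨i₂ - i₁, i₃ - i₁, i₄ - i₁, by omega, by omega, by omega, hper, hv₁,
    (hlab i₂ h₁₂.le (by omega)).trans hv₂, (hlab i₃ (by omega) h₃₄.le).trans hv₃,
    (hlab i₄ (by omega) le_rfl).trans hv₄⟩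

/-- Rotating the pattern if necessary, it can be read on a stretch of the cycle that ends just
before the point `z₀` where `σ'` and `σ` may differ. -/
theorem CycleOrderedFrom.exists_of_eqOn_ne {σ σ' : Perm α} {d z₀ : α} {x y : β}
    (h : CycleOrderedFrom σ f d x y x y)
    (hagree : ∀ n : ℕ, (σ ^ n) d ≠ z₀ → σ' ((σ ^ n) d) = σ ((σ ^ n) d)) :
    ∃ d', CycleOrderedFrom σ' f d' x y x y := by
  obtain ⟨a, b, c, ha, hab, hbc, hc, h₁, h₂, h₃, h₄⟩ := h
  set p := minimalPeriod σ d
  have hlab : ∀ n, f ((σ ^ (p + n)) d) = f ((σ ^ n) d) := fun n => by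
    rw [add_comm, pow_add_minimalPeriod_apply]
  have h₀ : f ((σ ^ 0) d) = x := by simpa using h₁
  have hpx : f ((σ ^ p) d) = x := (hlab 0).trans h₀
  have hwin : ∀ lo hi, (∀ n, lo ≤ n → n < hi → (σ ^ n) d ≠ z₀) →
      ∀ n, lo ≤ n → n < hi → σ' ((σ ^ n) d) = σ ((σ ^ n) d) :=
    fun lo hi hz n hlo hhi => hagree n (hz n hlo hhi)
  by_cases hz : ∃ j < p, (σ ^ j) d = z₀
  · obtain ⟨j, hj, rfl⟩ := hz
    have hne : ∀ n, n < 2 * p → n ≠ j → n ≠ j + p → (σ ^ n) d ≠ (σ ^ j) d :=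
      fun n hn h₁ h₂ heq => (eq_or_eq_add_minimalPeriod_of_pow_apply_eq hj hn heq).elim h₁ h₂
    rcases lt_or_ge j a with hja | hja
    · exact (cycleOrderedFrom_of_eqOn hab hbc hc (by omega)
        (hwin a p fun n _ _ => hne n (by omega) (by omega) (by omega)) h₂ h₃ h₄ hpx).rotate
    rcases lt_or_ge j b with hjb | hjb
    · exact ⟨_, cycleOrderedFrom_of_eqOn hbc hc (by omega : p < p + a) (by omega)
        (hwin b (p + a) fun n _ _ => hne n (by omega) (by omega) (by omega))
        h₃ h₄ hpx ((hlab a).trans h₂)⟩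
    rcases lt_or_ge j c with hjc | hjc
    · exact (cycleOrderedFrom_of_eqOn hc (by omega : p < p + a) (by omega : p + a < p + b)
        (by omega) (hwin c (p + b) fun n _ _ => hne n (by omega) (by omega) (by omega))
        h₄ hpx ((hlab a).trans h₂) ((hlab b).trans h₃)).rotate
    · exact ⟨_, cycleOrderedFrom_of_eqOn ha hab hbc (by omega)
        (hwin 0 c fun n _ _ => hne n (by omega) (by omega) (by omega)) h₀ h₂ h₃ h₄⟩
  · simp only [not_exists, not_and] at hz
    exact ⟨_, cycleOrderedFrom_of_eqOn ha hab hbc (by omega)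
      (hwin 0 c fun n _ _ => hz n (by omega)) h₀ h₂ h₃ h₄⟩

end cycleOrdered

section closure

open MulAction

theorem orbitRel_apply_of_mem {Γ : Subgroup (Perm α)} {g : Perm α} (hg : g ∈ Γ) (x : α) :
    orbitRel Γ α (g x) x :=
  ⟨⟨g, hg⟩, rfl⟩

theorem orbitRel_swap_apply {Γ : Subgroup (Perm α)} [DecidableEq α] {a b : α}
    (hab : orbitRel Γ α a b) (x : α) : orbitRel Γ α (swap a b x) x := by
  rcases eq_or_ne x a with rfl | hxa
  · rw [swap_apply_left]; exact (orbitRel Γ α).symm hab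
  rcases eq_or_ne x b with rfl | hxb
  · rw [swap_apply_right]; exact hab
  · rw [swap_apply_of_ne_of_ne hxa hxb]

variable {Γ : Subgroup (Perm β)} {s : Set (Perm α)} (φ : α → β)

theorem orbitRel_apply_of_mem_closure (hs : ∀ g ∈ s, ∀ x, orbitRel Γ β (φ (g x)) (φ x))
    {g : Perm α} (hg : g ∈ Subgroup.closure s) (x : α) : orbitRel Γ β (φ (g x)) (φ x) := by
  induction hg using Subgroup.closure_induction generalizing x with
  | mem g hg => exact hs g hg x
  | one => exact (orbitRel Γ β).refl _
  | mul g h _ _ hg hh => exact (orbitRel Γ β).trans (hg (h x)) (hh x)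
  | inv g _ hg => simpa using (orbitRel Γ β).symm (hg (g⁻¹ x))

variable [Finite α]

theorem card_orbitRel_quotient_le_of_closure (hs : ∀ g ∈ s, ∀ x, orbitRel Γ β (φ (g x)) (φ x))
    (hφ : ∀ y, ∃ x, orbitRel Γ β y (φ x)) :
    Nat.card (orbitRel.Quotient Γ β) ≤ Nat.card (orbitRel.Quotient (Subgroup.closure s) α) := by
  refine Nat.card_le_card_of_surjective (Quotient.map' φ fun x y ⟨g, hg⟩ => ?_) ?_
  · rw [← hg]; exact orbitRel_apply_of_mem_closure φ hs g.2 y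
  · rintro ⟨y⟩
    obtain ⟨x, hx⟩ := hφ y
    exact ⟨Quotient.mk'' x, (Quotient.sound hx).symm⟩

theorem card_orbitRel_quotient_le_of_closure_add_one
    (hs : ∀ g ∈ s, ∀ x, orbitRel Γ β (φ (g x)) (φ x)) (y₀ : β)
    (hφ : ∀ y, orbitRel Γ β y y₀ ∨ ∃ x, orbitRel Γ β y (φ x)) :
    Nat.card (orbitRel.Quotient Γ β) ≤
      Nat.card (orbitRel.Quotient (Subgroup.closure s) α) + 1 := by
  have : Finite (orbitRel.Quotient (Subgroup.closure s) α) := Quotient.finite _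
  rw [← Finite.card_option]
  refine Nat.card_le_card_of_surjective (fun q => q.elim (Quotient.mk'' y₀)
    (Quotient.map' φ fun x y ⟨g, hg⟩ => ?_)) ?_
  · rw [← hg]; exact orbitRel_apply_of_mem_closure φ hs g.2 y
  · rintro ⟨y⟩
    rcases hφ y with hy | ⟨x, hx⟩
    · exact ⟨none, (Quotient.sound hy).symm⟩
    · exact ⟨some (Quotient.mk'' x), (Quotient.sound hx).symm⟩

end closure

end Equiv.Perm

namespace AltPaper

open Equiv.Perm

variable {V : Type*}

instance (G : SimpleGraph V) [Finite V] : Finite G.Dart :=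
  Finite.of_injective _ Dart.toProd_injective

section deleteEdge

variable {G : SimpleGraph V} {u v : V}

def inclDart (d : (G.deleteEdges {s(u, v)}).Dart) : G.Dart :=
  ⟨d.toProd, (deleteEdges_adj.1 d.adj).1⟩

@[simp] theorem inclDart_fst (d : (G.deleteEdges {s(u, v)}).Dart) : (inclDart d).fst = d.fst :=
  rfl

theorem inclDart_injective : Injective (inclDart : (G.deleteEdges {s(u, v)}).Dart → G.Dart) :=
  fun _ _ h => Dart.ext _ _ (congrArg (fun d : G.Dart => d.toProd) h)

theorem inclDart_edge_ne (d : (G.deleteEdges {s(u, v)}).Dart) : (inclDart d).edge ≠ s(u, v) :=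
  (deleteEdges_adj.1 d.adj).2

theorem exists_inclDart_of_edge_ne {d : G.Dart} (h : d.edge ≠ s(u, v)) :
    ∃ d₀ : (G.deleteEdges {s(u, v)}).Dart, inclDart d₀ = d :=
  ⟨⟨d.toProd, deleteEdges_adj.2 ⟨d.adj, h⟩⟩, rfl⟩

variable (G u v) in
def deleteEdgeDartEquiv :
    (G.deleteEdges {s(u, v)}).Dart ≃ {d : G.Dart // d.edge ≠ s(u, v)} where
  toFun d := ⟨inclDart d, inclDart_edge_ne d⟩
  invFun d := ⟨d.val.toProd, deleteEdges_adj.2 ⟨d.val.adj, d.prop⟩⟩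
  left_inv _ := rfl
  right_inv _ := rfl

theorem dart_eq_or_eq_of_edge_eq (huv : G.Adj u v) {d : G.Dart} (h : d.edge = s(u, v)) :
    d = ⟨(u, v), huv⟩ ∨ d = ⟨(v, u), huv.symm⟩ := by
  rcases dart_edge_eq_mk'_iff.1 h with h | h
  · exact Or.inl (Dart.ext _ _ h)
  · exact Or.inr (Dart.ext _ _ h)

/-- The dart before which the new dart `P` is inserted into the rotation at `P.fst`. When `P.fst`
is isolated in `G - uv` this is `P` itself, and `P` becomes a fixed point of the rotation. -/
noncomputable def anchor (u v : V) (P : G.Dart) : G.Dart :=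
  open scoped Classical in
  if h : ∃ w, (G.deleteEdges {s(u, v)}).Adj P.fst w then
    inclDart ⟨(P.fst, h.choose), h.choose_spec⟩
  else P

theorem anchor_fst (P : G.Dart) : (anchor u v P).fst = P.fst := by
  unfold anchor
  split_ifs <;> rfl

theorem exists_inclDart_eq_anchor {P : G.Dart}
    (h : P.fst ∈ (G.deleteEdges {s(u, v)}).support) :
    ∃ d : (G.deleteEdges {s(u, v)}).Dart, inclDart d = anchor u v P := by
  rw [anchor, dif_pos ((G.deleteEdges {s(u, v)}).mem_support.1 h)]
  exact ⟨_, rfl⟩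

theorem anchor_eq_self {P : G.Dart} (h : P.fst ∉ (G.deleteEdges {s(u, v)}).support) :
    anchor u v P = P := by
  rw [anchor, dif_neg (mt (G.deleteEdges {s(u, v)}).mem_support.2 h)]

theorem support_eq_insert_insert (huv : G.Adj u v) :
    G.support = insert u (insert v (G.deleteEdges {s(u, v)}).support) := by
  refine subset_antisymm (fun w hw => ?_) (Set.insert_subset huv.left_mem_support
    (Set.insert_subset huv.right_mem_support (support_mono (deleteEdges_le _))))
  obtain ⟨x, hwx⟩ := G.mem_support.1 hw
  by_cases he : s(w, x) = s(u, v)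
  · rcases Sym2.eq_iff.1 he with ⟨rfl, -⟩ | ⟨rfl, -⟩
    · exact Set.mem_insert _ _
    · exact Set.mem_insert_of_mem _ (Set.mem_insert _ _)
  · exact Set.mem_insert_of_mem _
      (Set.mem_insert_of_mem _ (deleteEdges_adj.2 ⟨hwx, he⟩).left_mem_support)

variable [Finite V]

open scoped Classical in
theorem ncard_support_eq_of_adj (huv : G.Adj u v) :
    G.support.ncard = (G.deleteEdges {s(u, v)}).support.ncard +
      (if u ∈ (G.deleteEdges {s(u, v)}).support then 0 else 1) +
      (if v ∈ (G.deleteEdges {s(u, v)}).support then 0 else 1) := by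
  rw [support_eq_insert_insert huv]
  have hu : u ∈ insert v (G.deleteEdges {s(u, v)}).support ↔
      u ∈ (G.deleteEdges {s(u, v)}).support := by
    simp [huv.ne]
  split_ifs with h₁ h₂ h₂
  · rw [Set.ncard_insert_of_mem (hu.2 h₁), Set.ncard_insert_of_mem h₂]; rfl
  · rw [Set.ncard_insert_of_mem (hu.2 h₁), Set.ncard_insert_of_notMem h₂]
  · rw [Set.ncard_insert_of_notMem (mt hu.1 h₁), Set.ncard_insert_of_mem h₂]
  · rw [Set.ncard_insert_of_notMem (mt hu.1 h₁), Set.ncard_insert_of_notMem h₂]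

theorem card_edgeSet_deleteEdges_add_one (huv : G.Adj u v) :
    Nat.card (G.deleteEdges {s(u, v)}).edgeSet + 1 = Nat.card G.edgeSet := by
  rw [edgeSet_deleteEdges, Nat.card_coe_set_eq, Nat.card_coe_set_eq]
  exact Set.ncard_sdiff_singleton_add_one huv

end deleteEdge

namespace RotSys

variable {G : SimpleGraph V} [Finite V]

theorem fst_eq_of_sameCycle (R : RotSys G) {d d' : G.Dart} (h : R.rot.SameCycle d d') :
    d.fst = d'.fst :=
  (SameCycle.mem_of_mapsTo (s := {w : G.Dart | w.fst = d.fst})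
    (fun w hw => (R.fst_rot w).trans hw) rfl h).symm

theorem numVerts_eq_ncard_support (R : RotSys G) : R.numVerts = G.support.ncard := by
  rw [← Nat.card_coe_set_eq]
  refine le_antisymm (numCycles_le_card (fun d => (⟨d.fst, d.adj.left_mem_support⟩ : G.support))
    fun x y => ?_) (card_le_numCycles (fun w => ⟨(w.1, (G.mem_support.1 w.2).choose),
      (G.mem_support.1 w.2).choose_spec⟩) fun i j h => Subtype.ext (R.fst_eq_of_sameCycle h))
  rw [Subtype.mk.injEq]
  exact ⟨fun h => let ⟨n, hn⟩ := R.orbit_full x y h; ⟨n, by simpa using hn⟩,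
    R.fst_eq_of_sameCycle⟩

end RotSys

namespace RotSys

variable [DecidableEq V] {G : SimpleGraph V} {u v : V} (R : RotSys (G.deleteEdges {s(u, v)}))

def extRot : Perm G.Dart := R.rot.extendDomain (deleteEdgeDartEquiv G u v)

theorem extRot_inclDart (d : (G.deleteEdges {s(u, v)}).Dart) :
    R.extRot (inclDart d) = inclDart (R.rot d) :=
  R.rot.extendDomain_apply_image (deleteEdgeDartEquiv G u v) d

theorem extRot_of_edge_eq {d : G.Dart} (h : d.edge = s(u, v)) : R.extRot d = d :=
  R.rot.extendDomain_apply_not_subtype _ (not_not.2 h)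

theorem fst_extRot (d : G.Dart) : (R.extRot d).fst = d.fst := by
  by_cases h : d.edge = s(u, v)
  · rw [R.extRot_of_edge_eq h]
  · obtain ⟨d₀, rfl⟩ := exists_inclDart_of_edge_ne h
    rw [extRot_inclDart, inclDart_fst, inclDart_fst, R.fst_rot]

theorem semiconj_inclDart_extRot : Semiconj inclDart R.rot R.extRot :=
  fun d => (R.extRot_inclDart d).symm

theorem semiconj_inclDart_facePerm : Semiconj inclDart R.facePerm (R.extRot * dartRev G) :=
  fun d => (R.extRot_inclDart d.symm).symm

theorem numFaces_add_one_le [Finite V] (huv : G.Adj u v) :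
    R.numFaces + 1 ≤ (R.extRot * dartRev G).numCycles := by
  refine numCycles_add_one_le_of_semiconj inclDart_injective R.semiconj_inclDart_facePerm
    (y₀ := ⟨(u, v), huv⟩) fun x hx => inclDart_edge_ne x ?_
  refine SameCycle.mem_of_mapsTo (s := {z : G.Dart | z.edge = s(u, v)}) (fun z hz => ?_) rfl
    hx.symm
  simp only [Set.mem_ofPred_eq, Perm.mul_apply] at hz ⊢
  rwa [R.extRot_of_edge_eq (by exact (Dart.edge_symm z).trans hz), dartRev,
    Involutive.coe_toPerm, Dart.edge_symm]

variable (huv : G.Adj u v)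

/-- `swap a P * ρ` maps the `ρ`-predecessor of `a` to `P` and `P` to `a`, i.e. it inserts the
fixed point `P` of `ρ` just before `a` in the rotation. -/
noncomputable def insertRot : Perm G.Dart :=
  swap (anchor u v ⟨(u, v), huv⟩) ⟨(u, v), huv⟩ *
    swap (anchor u v ⟨(v, u), huv.symm⟩) ⟨(v, u), huv.symm⟩ * R.extRot

theorem swap_mul_extRot_apply :
    (swap (anchor u v ⟨(v, u), huv.symm⟩) ⟨(v, u), huv.symm⟩ * R.extRot) ⟨(u, v), huv⟩ =
      ⟨(u, v), huv⟩ := by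
  have h₁ : (⟨(u, v), huv⟩ : G.Dart) ≠ anchor u v ⟨(v, u), huv.symm⟩ :=
    fun h => huv.ne (by simpa [anchor_fst] using congrArg (fun d : G.Dart => d.fst) h)
  have h₂ : (⟨(u, v), huv⟩ : G.Dart) ≠ ⟨(v, u), huv.symm⟩ :=
    fun h => huv.ne (congrArg (fun d : G.Dart => d.fst) h)
  rw [mul_apply, R.extRot_of_edge_eq rfl, swap_apply_of_ne_of_ne h₁ h₂]

theorem insertRot_apply_left :
    R.insertRot huv ⟨(u, v), huv⟩ = anchor u v ⟨(u, v), huv⟩ := by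
  rw [insertRot, mul_assoc, mul_apply, swap_mul_extRot_apply, swap_apply_right]

theorem insertRot_apply_right :
    R.insertRot huv ⟨(v, u), huv.symm⟩ = anchor u v ⟨(v, u), huv.symm⟩ := by
  have h₁ : anchor u v ⟨(v, u), huv.symm⟩ ≠ anchor u v ⟨(u, v), huv⟩ :=
    fun h => huv.ne (by simpa [anchor_fst] using (congrArg (fun d : G.Dart => d.fst) h).symm)
  have h₂ : anchor u v ⟨(v, u), huv.symm⟩ ≠ ⟨(u, v), huv⟩ :=
    fun h => huv.ne (by simpa [anchor_fst] using (congrArg (fun d : G.Dart => d.fst) h).symm)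
  rw [insertRot, mul_apply, mul_apply,
    R.extRot_of_edge_eq (d := ⟨(v, u), huv.symm⟩) Sym2.eq_swap, swap_apply_right,
    swap_apply_of_ne_of_ne h₁ h₂]

theorem extRot_eq_swap_swap_insertRot (d : G.Dart) :
    R.extRot d = swap (anchor u v ⟨(v, u), huv.symm⟩) ⟨(v, u), huv.symm⟩
      (swap (anchor u v ⟨(u, v), huv⟩) ⟨(u, v), huv⟩ (R.insertRot huv d)) := by
  simp only [insertRot, mul_apply, swap_apply_self]

theorem fst_insertRot (d : G.Dart) : (R.insertRot huv d).fst = d.fst := by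
  have hswap : ∀ {P : G.Dart} (z : G.Dart), (swap (anchor u v P) P z).fst = z.fst := by
    intro P z
    rcases eq_or_ne z (anchor u v P) with rfl | h₁
    · rw [swap_apply_left, anchor_fst]
    rcases eq_or_ne z P with rfl | h₂
    · rw [swap_apply_right, anchor_fst]
    · rw [swap_apply_of_ne_of_ne h₁ h₂]
  simp only [insertRot, mul_apply, hswap, fst_extRot]

theorem orbitRel_extRot_apply (z : G.Dart) :
    MulAction.orbitRel (Subgroup.closure {R.insertRot huv, dartRev G}) G.Dart (R.extRot z) z := by
  set Γ := Subgroup.closure {R.insertRot huv, dartRev G}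
  have hρ : ∀ z, MulAction.orbitRel Γ G.Dart (R.insertRot huv z) z :=
    orbitRel_apply_of_mem (Subgroup.subset_closure (Set.mem_insert _ _))
  rw [R.extRot_eq_swap_swap_insertRot huv]
  exact (MulAction.orbitRel Γ G.Dart).trans
    (orbitRel_swap_apply (R.insertRot_apply_right huv ▸ hρ _) _)
    ((MulAction.orbitRel Γ G.Dart).trans
      (orbitRel_swap_apply (R.insertRot_apply_left huv ▸ hρ _) _) (hρ z))

variable [Finite V]

theorem sameCycle_insertRot_of_edge_ne {x y : G.Dart} (hx : x.edge ≠ s(u, v))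
    (hy : y.edge ≠ s(u, v)) (hxy : x.fst = y.fst) : (R.insertRot huv).SameCycle x y := by
  obtain ⟨x₀, rfl⟩ := exists_inclDart_of_edge_ne hx
  obtain ⟨y₀, rfl⟩ := exists_inclDart_of_edge_ne hy
  obtain ⟨n, hn⟩ := R.orbit_full x₀ y₀ hxy
  have hext : R.extRot.SameCycle (inclDart x₀) (inclDart y₀) :=
    (sameCycle_iff_of_semiconj inclDart_injective R.semiconj_inclDart_extRot).2 ⟨n, by simpa⟩
  have hP₂ : R.extRot ⟨(v, u), huv.symm⟩ = ⟨(v, u), huv.symm⟩ :=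
    R.extRot_of_edge_eq Sym2.eq_swap
  rw [insertRot, mul_assoc]
  refine (hext.swap_mul fun h => hx ?_).swap_mul fun h => hx ?_
  · rw [h.eq_of_right hP₂]; exact Sym2.eq_swap
  · rw [h.eq_of_right (R.swap_mul_extRot_apply huv)]; rfl

theorem sameCycle_insertRot_anchor_left :
    (R.insertRot huv).SameCycle (anchor u v ⟨(u, v), huv⟩) ⟨(u, v), huv⟩ := by
  rw [insertRot, mul_assoc]
  exact sameCycle_swap_mul_of_apply_eq_self (R.swap_mul_extRot_apply huv)

theorem sameCycle_insertRot_anchor_right :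
    (R.insertRot huv).SameCycle (anchor u v ⟨(v, u), huv.symm⟩) ⟨(v, u), huv.symm⟩ := by
  rw [insertRot, mul_assoc]
  refine (sameCycle_swap_mul_of_apply_eq_self
    (R.extRot_of_edge_eq (d := ⟨(v, u), huv.symm⟩) Sym2.eq_swap)).swap_mul
    fun h => huv.ne ?_
  simpa [anchor_fst] using
    (congrArg (fun d : G.Dart => d.fst) (h.eq_of_right (R.swap_mul_extRot_apply huv))).symm

theorem sameCycle_insertRot {d d' : G.Dart} (h : d.fst = d'.fst) :
    (R.insertRot huv).SameCycle d d' := by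
  have hnew : ∀ {x y : G.Dart}, y.edge ≠ s(u, v) → x.fst = y.fst →
      (R.insertRot huv).SameCycle x y := by
    intro x y hy hxy
    by_cases hx : x.edge = s(u, v)
    swap
    · exact R.sameCycle_insertRot_of_edge_ne huv hx hy hxy
    obtain ⟨y₀, rfl⟩ := exists_inclDart_of_edge_ne hy
    obtain ⟨a₀, ha₀⟩ := exists_inclDart_eq_anchor (u := u) (v := v) (P := x)
      (hxy ▸ y₀.adj.left_mem_support)
    have hlink : (R.insertRot huv).SameCycle (anchor u v x) x := by
      rcases dart_eq_or_eq_of_edge_eq huv hx with rfl | rfl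
      · exact R.sameCycle_insertRot_anchor_left huv
      · exact R.sameCycle_insertRot_anchor_right huv
    exact hlink.symm.trans (R.sameCycle_insertRot_of_edge_ne huv
      (ha₀ ▸ inclDart_edge_ne a₀) (inclDart_edge_ne y₀) ((anchor_fst _).trans hxy))
  by_cases hd' : d'.edge = s(u, v)
  · by_cases hd : d.edge = s(u, v)
    · rcases dart_eq_or_eq_of_edge_eq huv hd with rfl | rfl <;>
        rcases dart_eq_or_eq_of_edge_eq huv hd' with rfl | rfl
      all_goals first | exact SameCycle.rfl | exact absurd h (by simpa using huv.ne) |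
        exact absurd h.symm (by simpa using huv.ne)
    · exact (hnew hd h.symm).symm
  · exact hnew hd' h

noncomputable def insertEdge : RotSys G where
  rot := R.insertRot huv
  fst_rot := R.fst_insertRot huv
  orbit_full _ _ h := (R.sameCycle_insertRot huv h).exists_nat_pow_eq

theorem facePerm_insertEdge : (R.insertEdge huv).facePerm =
    swap (anchor u v ⟨(u, v), huv⟩) ⟨(u, v), huv⟩ *
      (swap (anchor u v ⟨(v, u), huv.symm⟩) ⟨(v, u), huv.symm⟩ * (R.extRot * dartRev G)) := by
  simp only [facePerm, insertEdge, insertRot, ← Perm.mul_def, mul_assoc]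

open scoped Classical in
theorem numFaces_insertEdge :
    R.numFaces + 1 ≤ (R.insertEdge huv).numFaces +
      (if u ∈ (G.deleteEdges {s(u, v)}).support then 1 else 0) +
      (if v ∈ (G.deleteEdges {s(u, v)}).support then 1 else 0) := by
  have hswap : ∀ (P : G.Dart) (σ : Perm G.Dart), σ.numCycles ≤
      (swap (anchor u v P) P * σ).numCycles +
        if P.fst ∈ (G.deleteEdges {s(u, v)}).support then 1 else 0 := by
    intro P σ
    split_ifs with hP
    · exact numCycles_le_numCycles_swap_mul_add_one σ _ _
    · rw [anchor_eq_self hP, swap_self, ← Perm.one_def, one_mul, add_zero]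
  have h₁ := R.numFaces_add_one_le huv
  have h₂ := hswap ⟨(v, u), huv.symm⟩ (R.extRot * dartRev G)
  have h₃ := hswap ⟨(u, v), huv⟩
    (swap (anchor u v ⟨(v, u), huv.symm⟩) ⟨(v, u), huv.symm⟩ * (R.extRot * dartRev G))
  rw [← facePerm_insertEdge] at h₃
  change R.numFaces + 1 ≤ (R.insertEdge huv).facePerm.numCycles + _ + _
  dsimp only at h₂ h₃
  omega

open scoped Classical in
theorem numComps_insertEdge :
    (R.insertEdge huv).numComps ≤
      R.numComps + if u ∈ (G.deleteEdges {s(u, v)}).support then 0 else 1 := by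
  set P₁ : G.Dart := ⟨(u, v), huv⟩
  set Γ := Subgroup.closure {R.insertRot huv, dartRev G}
  have hrev : ∀ z, MulAction.orbitRel Γ G.Dart (dartRev G z) z :=
    orbitRel_apply_of_mem (Subgroup.subset_closure (Set.mem_insert_of_mem _ rfl))
  have hgen : ∀ g ∈ ({R.rot, dartRev _} : Set (Perm (G.deleteEdges {s(u, v)}).Dart)),
      ∀ x, MulAction.orbitRel Γ G.Dart (inclDart (g x)) (inclDart x) := by
    rintro g (rfl | rfl) x
    · exact R.extRot_inclDart x ▸ R.orbitRel_extRot_apply huv _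
    · exact hrev _
  have hcover : ∀ z, MulAction.orbitRel Γ G.Dart z P₁ ∨
      ∃ x : (G.deleteEdges {s(u, v)}).Dart, MulAction.orbitRel Γ G.Dart z (inclDart x) := by
    intro z
    by_cases hz : z.edge = s(u, v)
    · rcases dart_eq_or_eq_of_edge_eq huv hz with rfl | rfl
      · exact Or.inl ((MulAction.orbitRel Γ G.Dart).refl _)
      · exact Or.inl (hrev P₁)
    · obtain ⟨x, rfl⟩ := exists_inclDart_of_edge_ne hz
      exact Or.inr ⟨x, (MulAction.orbitRel Γ G.Dart).refl _⟩
  split_ifs with hu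
  · obtain ⟨a₀, ha₀⟩ := exists_inclDart_eq_anchor (P := P₁) hu
    have hP₁ : MulAction.orbitRel Γ G.Dart P₁ (inclDart a₀) := ha₀ ▸
      R.insertRot_apply_left huv ▸ (MulAction.orbitRel Γ G.Dart).symm
        (orbitRel_apply_of_mem (Subgroup.subset_closure (Set.mem_insert _ _)) P₁)
    refine card_orbitRel_quotient_le_of_closure _ hgen fun z => ?_
    exact (hcover z).elim (fun hz => ⟨a₀, (MulAction.orbitRel Γ G.Dart).trans hz hP₁⟩) id
  · exact card_orbitRel_quotient_le_of_closure_add_one _ hgen P₁ hcover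

theorem genusLE_insertEdge {k : ℕ} (h : R.genusLE k) : (R.insertEdge huv).genusLE (k + 1) := by
  classical
  have hV := ncard_support_eq_of_adj huv
  have hE := card_edgeSet_deleteEdges_add_one huv
  have hF := R.numFaces_insertEdge huv
  have hC := R.numComps_insertEdge huv
  unfold genusLE at h ⊢
  rw [numVerts_eq_ncard_support] at h ⊢
  split_ifs at hV hF hC <;> omega

theorem facePerm_insertEdge_apply {w : G.Dart} (hw : w.edge ≠ s(u, v))
    (ha : (R.extRot * dartRev G) w ≠ anchor u v ⟨(u, v), huv⟩)
    (hb : (R.extRot * dartRev G) w ≠ anchor u v ⟨(v, u), huv.symm⟩) :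
    (R.insertEdge huv).facePerm w = (R.extRot * dartRev G) w := by
  have hw' : ((R.extRot * dartRev G) w).edge ≠ s(u, v) := by
    obtain ⟨w₀, rfl⟩ := exists_inclDart_of_edge_ne hw
    rw [← R.semiconj_inclDart_facePerm.eq]
    exact inclDart_edge_ne _
  have hne : ∀ {P : G.Dart}, P.edge = s(u, v) → (R.extRot * dartRev G) w ≠ P :=
    fun hP h => hw' (h ▸ hP)
  rw [facePerm_insertEdge, mul_apply, mul_apply,
    swap_apply_of_ne_of_ne hb (hne (P := ⟨(v, u), huv.symm⟩) Sym2.eq_swap),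
    swap_apply_of_ne_of_ne ha (hne rfl)]

theorem cofacial_of_pow_apply_eq_anchor {d₀ : (G.deleteEdges {s(u, v)}).Dart} {i j : ℕ}
    (hi : ((R.extRot * dartRev G) ^ i) (inclDart d₀) = anchor u v ⟨(u, v), huv⟩)
    (hj : ((R.extRot * dartRev G) ^ j) (inclDart d₀) = anchor u v ⟨(v, u), huv.symm⟩) :
    R.Cofacial u v := by
  rw [pow_apply_of_semiconj R.semiconj_inclDart_facePerm] at hi hj
  obtain ⟨n, hn⟩ := (sameCycle_pow_left.2 (sameCycle_pow_right.2 SameCycle.rfl) :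
    R.facePerm.SameCycle ((R.facePerm ^ i) d₀) ((R.facePerm ^ j) d₀)).exists_nat_pow_eq
  exact ⟨_, n, by rw [← inclDart_fst, hi, anchor_fst],
    by rw [hn, ← inclDart_fst, hj, anchor_fst]⟩

theorem altFace_insertEdge {x y : V} (halt : R.altFace x y) (hcof : ¬R.Cofacial u v) :
    (R.insertEdge huv).altFace x y := by
  obtain ⟨d₀, hd₀⟩ := halt
  set F₀ := R.extRot * dartRev G
  have hF₀ : CycleOrderedFrom F₀ (·.fst) (inclDart d₀) x y x y :=
    CycleOrderedFrom.map inclDart_injective R.semiconj_inclDart_facePerm (fun _ => rfl) hd₀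
  have hcycle : ∀ n, ((F₀ ^ n) (inclDart d₀)).edge ≠ s(u, v) ∧
      F₀ ((F₀ ^ n) (inclDart d₀)) = (F₀ ^ (n + 1)) (inclDart d₀) := fun n => by
    refine ⟨?_, by rw [pow_succ']; rfl⟩
    rw [pow_apply_of_semiconj R.semiconj_inclDart_facePerm]
    exact inclDart_edge_ne _
  by_cases hb : ∃ j, (F₀ ^ j) (inclDart d₀) = anchor u v ⟨(v, u), huv.symm⟩
  · obtain ⟨j, hj⟩ := hb
    refine hF₀.exists_of_eqOn_ne (z₀ := F₀.symm (anchor u v ⟨(v, u), huv.symm⟩))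
      fun n hn => R.facePerm_insertEdge_apply huv (hcycle n).1 ?_ ?_
    · exact fun h => hcof (R.cofacial_of_pow_apply_eq_anchor huv ((hcycle n).2.symm.trans h) hj)
    · exact fun h => hn (F₀.eq_symm_apply.2 h)
  · refine hF₀.exists_of_eqOn_ne (z₀ := F₀.symm (anchor u v ⟨(u, v), huv⟩))
      fun n hn => R.facePerm_insertEdge_apply huv (hcycle n).1 ?_ ?_
    · exact fun h => hn (F₀.eq_symm_apply.2 h)
    · exact fun h => hb ⟨n + 1, (hcycle n).2.symm.trans h⟩

end RotSys

theorem genusLE_of_forall_not_adj {G : SimpleGraph V} (h : ∀ a b, ¬G.Adj a b) (k : ℕ) :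
    GenusLE G k := by
  have : IsEmpty G.Dart := ⟨fun d => h _ _ d.adj⟩
  have hE : G.edgeSet = ∅ := Set.eq_empty_of_forall_notMem fun e he => by
    induction e using Sym2.ind with
    | h a b => exact h a b he
  refine ⟨⟨1, fun _ => rfl, fun d => isEmptyElim d⟩, ?_⟩
  simp [RotSys.genusLE, RotSys.numComps, hE]

end AltPaper

open AltPaper in
/-- second half of Lemma lm-alt-jump: If `G` is an obstruction for the
orientable surface of genus `k` and, for every edge `uv`, the graph `G - uv` has an
embedding of genus at most `k` with an `xy`-alternating face in which `u` and `v` are not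
cofacial, then `G` has an embedding of genus at most `k + 1` with an `xy`-alternating
face. -/
theorem statement_15 {V : Type*} [Fintype V] (G : SimpleGraph V) (x y : V) (k : ℕ)
    (hobs : ¬ GenusLE G k ∧ ∀ e ∈ G.edgeSet, GenusLE (G.deleteEdges {e}) k)
    (hPi : ∀ u v : V, G.Adj u v →
      ∃ R : RotSys (G.deleteEdges {s(u, v)}), R.genusLE k ∧ R.altFace x y ∧
        ¬ R.Cofacial u v) :
    AltEmb G x y (k + 1) := by
  classical
  obtain ⟨u, v, huv⟩ : ∃ u v, G.Adj u v := by
    by_contra hG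
    simp only [not_exists] at hG
    exact hobs.1 (genusLE_of_forall_not_adj hG k)
  obtain ⟨R, hR, halt, hcof⟩ := hPi u v huv
  exact ⟨R.insertEdge huv, R.genusLE_insertEdge huv hR, R.altFace_insertEdge huv halt hcof⟩
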